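/- Let C ≥ 1 be an integer, U > 0, B ≥ 0, δ ≥ 0, ζ' ≥ 0, η' ≥ 0 real numbers, and for each c ∈ {1, …, C} let Z^c ≥ 0 and P^c_max ≥ 0 be reals; set γ' = √(Σ_{c=1}^{C} P^c_max). Let finite index sets be given so that H', Ĥ' are K×N complex matrices and D', D̂' are K×K complex matrices, and let V'* and V'^opt be N×K block-diagonal complex matrices with diagonal blocks V^{c,*} and V^{c,opt} (of sizes N^c×K^c with Σ_c N^c = N, Σ_c K^c = K) satisfying ‖V^{c,*}‖_F² ≤ P^c_max and ‖V^{c,opt}‖_F² ≤ P^c_max for all c. Define φ'(H, V, D) = U‖HV − D‖_F² + Σ_{c=1}^{C} Z^c·‖V^c‖_F² for block-diagonal V with blocks V^c. Assume ‖H'‖_F ≤ B, ‖H' − Ĥ'‖_F ≤ Bδ, ‖D'‖_F ≤ ζ'B, ‖D̂'‖_F ≤ ζ'B(1+δ), ‖D' − D̂'‖_F ≤ η'Bδ, and φ'(Ĥ', V'*, D̂') ≤ φ'(Ĥ', V'^opt, D̂'). Then φ'(H', V'*, D') − φ'(H', V'^opt, D') ≤ U·φ̄', where φ̄' = 2·[(2+δ)(γ'²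 + ζ'η') + 2(ζ'(1+δ) + η')·γ']·B²·δ. -/

import Mathlib

/-!
On both precoders the estimated and the true objectives differ only in the distortion term
`U‖HV - D‖_F²`, and expanding `‖x - d‖² = ‖x‖² - 2 Re⟪x, d⟫ + ‖d‖²` in the Frobenius inner
product bounds `|‖HV - D‖_F² - ‖ĤV - D̂‖_F²|` by a quantity linear in the perturbations
`‖H - Ĥ‖_F ≤ Bδ` and `‖D - D̂‖_F ≤ η'Bδ`, using `‖V‖_F ≤ γ'` for block-diagonal precoders.
Since `V'*` is optimal for the estimated objective, the true gap is at most twice that bound.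
-/

open Matrix

noncomputable def frobNorm {m n : Type*} [Fintype m] [Fintype n]
    (A : Matrix m n ℂ) : ℝ :=
  Real.sqrt (∑ i, ∑ j, ‖A i j‖ ^ 2)

/-- The multi-cell objective φ'(H, V, D) = U‖H·blkdiag{V¹,…,V^C} − D‖_F²
+ Σ_c Z^c‖V^c‖_F², for a block-diagonal precoder with blocks V^c. -/
noncomputable def phi' {C : ℕ} {Kc Nc : Fin C → ℕ} (U : ℝ) (Z : Fin C → ℝ)
    (H : Matrix (Σ c, Fin (Kc c)) (Σ c, Fin (Nc c)) ℂ)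
    (Vb : ∀ c, Matrix (Fin (Nc c)) (Fin (Kc c)) ℂ)
    (D : Matrix (Σ c, Fin (Kc c)) (Σ c, Fin (Kc c)) ℂ) : ℝ :=
  U * frobNorm (H * Matrix.blockDiagonal' Vb - D) ^ 2 +
    ∑ c, Z c * frobNorm (Vb c) ^ 2

section InnerProductSpace

open scoped InnerProductSpace

theorem abs_norm_sq_sub_norm_sq_le {E : Type*} [SeminormedAddCommGroup E] {x y : E}
    {a b b' : ℝ} (hxy : ‖x - y‖ ≤ a) (hx : ‖x‖ ≤ b) (hy : ‖y‖ ≤ b') :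
    |‖x‖ ^ 2 - ‖y‖ ^ 2| ≤ a * (b + b') :=
  calc |‖x‖ ^ 2 - ‖y‖ ^ 2| = |‖x‖ - ‖y‖| * (‖x‖ + ‖y‖) := by
        rw [sq_sub_sq, abs_mul, abs_of_nonneg (by positivity), mul_comm]
    _ ≤ a * (b + b') :=
        mul_le_mul ((abs_norm_sub_norm_le x y).trans hxy) (add_le_add hx hy) (by positivity)
          ((norm_nonneg _).trans hxy)

theorem abs_re_inner_sub_re_inner_le {𝕜 E : Type*} [RCLike 𝕜] [SeminormedAddCommGroup E]
    [InnerProductSpace 𝕜 E] {x x' d d' : E} {a bx e bd' : ℝ}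
    (hxx : ‖x - x'‖ ≤ a) (hx : ‖x‖ ≤ bx) (hdd : ‖d - d'‖ ≤ e) (hd' : ‖d'‖ ≤ bd') :
    |RCLike.re ⟪x, d⟫_𝕜 - RCLike.re ⟪x', d'⟫_𝕜| ≤ bx * e + a * bd' := by
  have hsplit : ⟪x, d⟫_𝕜 - ⟪x', d'⟫_𝕜 = ⟪x, d - d'⟫_𝕜 + ⟪x - x', d'⟫_𝕜 := by
    rw [inner_sub_right, inner_sub_left]; ring
  calc |RCLike.re ⟪x, d⟫_𝕜 - RCLike.re ⟪x', d'⟫_𝕜|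
      = |RCLike.re ⟪x, d - d'⟫_𝕜 + RCLike.re ⟪x - x', d'⟫_𝕜| := by
        rw [← map_sub, hsplit, map_add]
    _ ≤ ‖⟪x, d - d'⟫_𝕜‖ + ‖⟪x - x', d'⟫_𝕜‖ :=
        (abs_add_le _ _).trans (add_le_add (RCLike.abs_re_le_norm _) (RCLike.abs_re_le_norm _))
    _ ≤ ‖x‖ * ‖d - d'‖ + ‖x - x'‖ * ‖d'‖ :=
        add_le_add (norm_inner_le_norm _ _) (norm_inner_le_norm _ _)
    _ ≤ bx * e + a * bd' :=
        add_le_add (mul_le_mul hx hdd (norm_nonneg _) ((norm_nonneg _).trans hx))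
          (mul_le_mul hxx hd' (norm_nonneg _) ((norm_nonneg _).trans hxx))

theorem abs_norm_sub_sq_sub_norm_sub_sq_le (𝕜 : Type*) {E : Type*} [RCLike 𝕜]
    [SeminormedAddCommGroup E] [InnerProductSpace 𝕜 E] {x x' d d' : E} {a bx bx' e bd bd' : ℝ}
    (hxx : ‖x - x'‖ ≤ a) (hx : ‖x‖ ≤ bx) (hx' : ‖x'‖ ≤ bx')
    (hdd : ‖d - d'‖ ≤ e) (hd : ‖d‖ ≤ bd) (hd' : ‖d'‖ ≤ bd') :
    |‖x - d‖ ^ 2 - ‖x' - d'‖ ^ 2| ≤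
      a * (bx + bx') + 2 * (bx * e + a * bd') + e * (bd + bd') := by
  have hx2 := abs_le.1 (abs_norm_sq_sub_norm_sq_le hxx hx hx')
  have hd2 := abs_le.1 (abs_norm_sq_sub_norm_sq_le hdd hd hd')
  have hxd := abs_le.1 (abs_re_inner_sub_re_inner_le (𝕜 := 𝕜) hxx hx hdd hd')
  rw [@norm_sub_sq 𝕜, @norm_sub_sq 𝕜, abs_le]
  constructor <;> linarith [hx2.1, hx2.2, hd2.1, hd2.2, hxd.1, hxd.2]

end InnerProductSpace

section Frobenius

variable {m n p : Type*} [Fintype m] [Fintype n] [Fintype p]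

theorem frobNorm_nonneg (A : Matrix m n ℂ) : 0 ≤ frobNorm A :=
  Real.sqrt_nonneg _

theorem frobNorm_sq (A : Matrix m n ℂ) : frobNorm A ^ 2 = ∑ i, ∑ j, ‖A i j‖ ^ 2 :=
  Real.sq_sqrt (by positivity)

theorem frobNorm_eq_norm_vec (A : Matrix m n ℂ) :
    frobNorm A = ‖(WithLp.toLp 2 A.vec : EuclideanSpace ℂ (n × m))‖ := by
  rw [EuclideanSpace.norm_eq, frobNorm, Fintype.sum_prod_type, Finset.sum_comm]
  rfl

attribute [local instance] Matrix.frobeniusNormedAddCommGroup in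
theorem frobNorm_eq_frobenius_norm (A : Matrix m n ℂ) : frobNorm A = ‖A‖ := by
  simp only [frobNorm, frobenius_norm_def, Real.sqrt_eq_rpow, Real.rpow_two]

attribute [local instance] Matrix.frobeniusNormedAddCommGroup in
theorem frobNorm_mul_le (A : Matrix m n ℂ) (B : Matrix n p ℂ) :
    frobNorm (A * B) ≤ frobNorm A * frobNorm B := by
  simpa only [frobNorm_eq_frobenius_norm] using frobenius_norm_mul A B

attribute [local instance] Matrix.frobeniusNormedAddCommGroup in
theorem frobNorm_le_add_frobNorm_sub (A B : Matrix m n ℂ) :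
    frobNorm B ≤ frobNorm A + frobNorm (A - B) := by
  simpa only [frobNorm_eq_frobenius_norm] using norm_le_norm_add_norm_sub A B

theorem abs_frobNorm_mul_sub_sq_sub_le {H H' : Matrix m n ℂ} {W : Matrix n p ℂ}
    {D D' : Matrix m p ℂ} {a b b' g e d d' : ℝ}
    (hHH : frobNorm (H - H') ≤ a) (hH : frobNorm H ≤ b) (hH' : frobNorm H' ≤ b')
    (hW : frobNorm W ≤ g)
    (hDD : frobNorm (D - D') ≤ e) (hD : frobNorm D ≤ d) (hD' : frobNorm D' ≤ d') :
    |frobNorm (H * W - D) ^ 2 - frobNorm (H' * W - D') ^ 2| ≤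
      a * g * (b * g + b' * g) + 2 * (b * g * e + a * g * d') + e * (d + d') := by
  have hmul {X : Matrix m n ℂ} {c : ℝ} (hX : frobNorm X ≤ c) : frobNorm (X * W) ≤ c * g :=
    (frobNorm_mul_le X W).trans
      (mul_le_mul hX hW (frobNorm_nonneg W) ((frobNorm_nonneg X).trans hX))
  have hHWW := hmul hHH
  have hHW := hmul hH
  have hHW' := hmul hH'
  rw [Matrix.sub_mul] at hHWW
  simp only [frobNorm_eq_norm_vec, vec_sub, WithLp.toLp_sub] at hHWW hHW hHW' hDD hD hD' ⊢
  exact abs_norm_sub_sq_sub_norm_sub_sq_le ℂ hHWW hHW hHW' hDD hD hD'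

theorem frobNorm_blockDiagonal'_sq {o : Type*} [Fintype o] [DecidableEq o]
    {m' n' : o → Type*} [∀ i, Fintype (m' i)] [∀ i, Fintype (n' i)]
    (V : ∀ i, Matrix (m' i) (n' i) ℂ) :
    frobNorm (blockDiagonal' V) ^ 2 = ∑ i, frobNorm (V i) ^ 2 := by
  simp only [frobNorm_sq, ← Finset.univ_sigma_univ, Finset.sum_sigma]
  refine Finset.sum_congr rfl fun i _ => Finset.sum_congr rfl fun a _ => ?_
  rw [Finset.sum_eq_single i]
  · simp
  · intro j _ hji
    exact Finset.sum_eq_zero fun b _ => by simp [blockDiagonal'_apply_ne V _ _ (Ne.symm hji)]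
  · simp

theorem frobNorm_blockDiagonal'_le_sqrt_sum {o : Type*} [Fintype o] [DecidableEq o]
    {m' n' : o → Type*} [∀ i, Fintype (m' i)] [∀ i, Fintype (n' i)]
    {V : ∀ i, Matrix (m' i) (n' i) ℂ} {P : o → ℝ} (hV : ∀ i, frobNorm (V i) ^ 2 ≤ P i) :
    frobNorm (blockDiagonal' V) ≤ Real.sqrt (∑ i, P i) := by
  rw [← Real.sqrt_sq (frobNorm_nonneg _), frobNorm_blockDiagonal'_sq]
  exact Real.sqrt_le_sqrt (Finset.sum_le_sum fun i _ => hV i)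

end Frobenius

theorem phi'_sub_phi' {C : ℕ} {Kc Nc : Fin C → ℕ} (U : ℝ) (Z : Fin C → ℝ)
    (H H' : Matrix (Σ c, Fin (Kc c)) (Σ c, Fin (Nc c)) ℂ)
    (V : ∀ c, Matrix (Fin (Nc c)) (Fin (Kc c)) ℂ)
    (D D' : Matrix (Σ c, Fin (Kc c)) (Σ c, Fin (Kc c)) ℂ) :
    phi' U Z H V D - phi' U Z H' V D' =
      U * (frobNorm (H * blockDiagonal' V - D) ^ 2 -
        frobNorm (H' * blockDiagonal' V - D') ^ 2) := by
  unfold phi'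
  ring

theorem multicell_optimality_gap_imperfect_csi_general {C : ℕ}
    (U B δ ζ' η' : ℝ) (hU : 0 < U) (Z Pmax : Fin C → ℝ) {Kc Nc : Fin C → ℕ}
    (H' Hhat' : Matrix (Σ c, Fin (Kc c)) (Σ c, Fin (Nc c)) ℂ)
    (D' Dhat' : Matrix (Σ c, Fin (Kc c)) (Σ c, Fin (Kc c)) ℂ)
    (Vstar Vopt : ∀ c, Matrix (Fin (Nc c)) (Fin (Kc c)) ℂ)
    (hVs : ∀ c, frobNorm (Vstar c) ^ 2 ≤ Pmax c)
    (hVo : ∀ c, frobNorm (Vopt c) ^ 2 ≤ Pmax c)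
    (hH : frobNorm H' ≤ B) (hHH : frobNorm (H' - Hhat') ≤ B * δ)
    (hD : frobNorm D' ≤ ζ' * B) (hDhat : frobNorm Dhat' ≤ ζ' * B * (1 + δ))
    (hDD : frobNorm (D' - Dhat') ≤ η' * B * δ)
    (hopt : phi' U Z Hhat' Vstar Dhat' ≤ phi' U Z Hhat' Vopt Dhat') :
    phi' U Z H' Vstar D' - phi' U Z H' Vopt D' ≤
      U * (2 * ((2 + δ) * ((Real.sqrt (∑ c, Pmax c)) ^ 2 + ζ' * η') +
        2 * (ζ' * (1 + δ) + η') * Real.sqrt (∑ c, Pmax c)) * B ^ 2 * δ) := by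
  set γ := Real.sqrt (∑ c, Pmax c)
  have hHhat : frobNorm Hhat' ≤ B * (1 + δ) := by
    linarith [frobNorm_le_add_frobNorm_sub H' Hhat']
  have hgap (V : ∀ c, Matrix (Fin (Nc c)) (Fin (Kc c)) ℂ)
      (hV : ∀ c, frobNorm (V c) ^ 2 ≤ Pmax c) :
      |phi' U Z H' V D' - phi' U Z Hhat' V Dhat'| ≤
        U * (((2 + δ) * (γ ^ 2 + ζ' * η') + 2 * (ζ' * (1 + δ) + η') * γ) * B ^ 2 * δ) := by
    rw [phi'_sub_phi', abs_mul, abs_of_pos hU]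
    refine mul_le_mul_of_nonneg_left ((abs_frobNorm_mul_sub_sq_sub_le hHH hH hHhat
      (frobNorm_blockDiagonal'_le_sqrt_sum hV) hDD hD hDhat).trans_eq (by ring)) hU.le
  have hgap_star := abs_le.1 (hgap Vstar hVs)
  have hgap_opt := abs_le.1 (hgap Vopt hVo)
  linarith [hgap_star.2, hgap_opt.1]

/-- Lemma 9 of the paper (the multi-cell optimality-gap bound) stated
deterministically, with γ' = √(Σ_c P^c_max). -/
theorem multicell_optimality_gap_imperfect_csi {C : ℕ} (hC : 1 ≤ C)
    (U B δ ζ' η' : ℝ)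
    (hU : 0 < U) (hB : 0 ≤ B) (hδ : 0 ≤ δ) (hζ : 0 ≤ ζ') (hη : 0 ≤ η')
    (Z Pmax : Fin C → ℝ) (hZ : ∀ c, 0 ≤ Z c) (hPmax : ∀ c, 0 ≤ Pmax c)
    {Kc Nc : Fin C → ℕ}
    (H' Hhat' : Matrix (Σ c, Fin (Kc c)) (Σ c, Fin (Nc c)) ℂ)
    (D' Dhat' : Matrix (Σ c, Fin (Kc c)) (Σ c, Fin (Kc c)) ℂ)
    (Vstar Vopt : ∀ c, Matrix (Fin (Nc c)) (Fin (Kc c)) ℂ)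
    (hVs : ∀ c, frobNorm (Vstar c) ^ 2 ≤ Pmax c)
    (hVo : ∀ c, frobNorm (Vopt c) ^ 2 ≤ Pmax c)
    (hH : frobNorm H' ≤ B) (hHH : frobNorm (H' - Hhat') ≤ B * δ)
    (hD : frobNorm D' ≤ ζ' * B) (hDhat : frobNorm Dhat' ≤ ζ' * B * (1 + δ))
    (hDD : frobNorm (D' - Dhat') ≤ η' * B * δ)
    (hopt : phi' U Z Hhat' Vstar Dhat' ≤ phi' U Z Hhat' Vopt Dhat') :
    phi' U Z H' Vstar D' - phi' U Z H' Vopt D' ≤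
      U * (2 * ((2 + δ) * ((Real.sqrt (∑ c, Pmax c)) ^ 2 + ζ' * η') +
        2 * (ζ' * (1 + δ) + η') * Real.sqrt (∑ c, Pmax c)) * B ^ 2 * δ) :=
  multicell_optimality_gap_imperfect_csi_general U B δ ζ' η' hU Z Pmax H' Hhat' D' Dhat' Vstar Vopt
    hVs hVo hH hHH hD hDhat hDD hopt
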